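/- arXiv:2310.05263 — 2 statements merged into one kernel-verified Lean document; each statement's English description precedes it below -/
import Mathlib

section
/- (Theorem 1, first part.) Let r > 0, let n ≥ 1 be a natural number, and let x̃ ∈ ℝ². Let m = x̃/(n+1) and Σ = (n r²/(4(n+1)))·I₂ + (n/(n+1)²)·x̃ x̃ᵀ, the mean and covariance of the poisoned target class. Then the squared Mahalanobis distance of x̃ from the poisoned class satisfies d_M²(x̃) := (x̃ − m)ᵀ Σ⁻¹ (x̃ − m) = 4 n ‖x̃‖² / ( (n+1) r² + 4 ‖x̃‖² ); equivalently, when x̃ ≠ 0, d_M²(x̃) = (4n/((n+1) r²)) · ( (n+1) r² ) / ( (n+1) r² / ‖x̃‖² + 4 ). -/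
/-!
The centred sample `x̃ - m = (n/(n+1)) x̃` is parallel to `x̃`, and `x̃` is an eigenvector of the
covariance `Σ = c I + k x̃ x̃ᵀ` with eigenvalue `c + k ‖x̃‖²`. Since `Σ` is positive definite, `x̃` is
also an eigenvector of `Σ⁻¹`, so the Mahalanobis distance is `(n/(n+1))² ‖x̃‖² / (c + k ‖x̃‖²)`.
-/

open Matrix

namespace Matrix

variable {ι : Type*} [Fintype ι] [DecidableEq ι]

theorem smul_one_add_smul_vecMulVec_self_mulVec {R : Type*} [CommRing R] (c k : R) (v : ι → R) :
    (c • 1 + k • vecMulVec v v) *ᵥ v = (c + k * (v ⬝ᵥ v)) • v := by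
  rw [add_mulVec, smul_mulVec, smul_mulVec, one_mulVec, vecMulVec_mulVec, op_smul_eq_smul,
    smul_smul, add_smul]

theorem posDef_smul_one_add_smul_vecMulVec_self {c k : ℝ} (hc : 0 < c) (hk : 0 ≤ k)
    (v : ι → ℝ) : (c • 1 + k • vecMulVec v v).PosDef := by
  simpa using (PosDef.one.smul hc).add_posSemidef ((posSemidef_vecMulVec_self_star v).smul hk)

theorem inv_smul_one_add_smul_vecMulVec_self_mulVec {c k : ℝ} (hc : 0 < c) (hk : 0 ≤ k)
    (v : ι → ℝ) : (c • 1 + k • vecMulVec v v)⁻¹ *ᵥ v = (c + k * (v ⬝ᵥ v))⁻¹ • v := by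
  have : Invertible (c • 1 + k • vecMulVec v v) :=
    (posDef_smul_one_add_smul_vecMulVec_self hc hk v).isUnit.invertible
  have hμ : c + k * (v ⬝ᵥ v) ≠ 0 := by
    have := dotProduct_self_star_nonneg v
    positivity
  refine inv_mulVec_eq_vec ?_
  rw [mulVec_smul, smul_one_add_smul_vecMulVec_self_mulVec, smul_smul, inv_mul_cancel₀ hμ, one_smul]

theorem smul_dotProduct_inv_smul_one_add_smul_vecMulVec_self_mulVec_smul {c k : ℝ} (hc : 0 < c)
    (hk : 0 ≤ k) (v : ι → ℝ) (t : ℝ) :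
    (t • v) ⬝ᵥ ((c • 1 + k • vecMulVec v v)⁻¹ *ᵥ (t • v))
      = t ^ 2 * (v ⬝ᵥ v) / (c + k * (v ⬝ᵥ v)) := by
  rw [mulVec_smul, inv_smul_one_add_smul_vecMulVec_self_mulVec hc hk, smul_dotProduct,
    dotProduct_smul, dotProduct_smul]
  simp only [smul_eq_mul]
  ring

end Matrix

/-- Theorem 1, first part: the squared Mahalanobis distance of the poisoned sample `x̃` from
the poisoned target class (mean `m = x̃/(n+1)`, covariance
`Σ = (n r²/(4(n+1)))·I₂ + (n/(n+1)²)·x̃ x̃ᵀ`) equals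
`4 n ‖x̃‖² / ((n+1) r² + 4 ‖x̃‖²)`, equivalently (for `x̃ ≠ 0`)
`(4n/((n+1) r²)) · ((n+1) r²) / ((n+1) r²/‖x̃‖² + 4)`. -/
theorem mahalanobis_distance_of_poisoned_sample
    (r : ℝ) (hr : 0 < r) (n : ℕ) (hn : 1 ≤ n)
    (xt : EuclideanSpace ℝ (Fin 2))
    (m : EuclideanSpace ℝ (Fin 2)) (hm : m = ((n : ℝ) + 1)⁻¹ • xt)
    (S : Matrix (Fin 2) (Fin 2) ℝ)
    (hS : S = ((n : ℝ) * r ^ 2 / (4 * ((n : ℝ) + 1))) • (1 : Matrix (Fin 2) (Fin 2) ℝ)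
        + ((n : ℝ) / ((n : ℝ) + 1) ^ 2) • Matrix.of (fun i j => xt i * xt j)) :
    (xt - m) ⬝ᵥ (S⁻¹ *ᵥ (xt - m))
        = 4 * (n : ℝ) * ‖xt‖ ^ 2 / (((n : ℝ) + 1) * r ^ 2 + 4 * ‖xt‖ ^ 2) ∧
      (xt ≠ 0 →
        (xt - m) ⬝ᵥ (S⁻¹ *ᵥ (xt - m))
          = (4 * (n : ℝ) / (((n : ℝ) + 1) * r ^ 2)) *
              ((((n : ℝ) + 1) * r ^ 2) / (((n : ℝ) + 1) * r ^ 2 / ‖xt‖ ^ 2 + 4))) := by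
  have hn₀ : (0 : ℝ) < n := by exact_mod_cast hn
  have hcentered : WithLp.ofLp xt - WithLp.ofLp m = ((n : ℝ) / (n + 1)) • WithLp.ofLp xt := by
    rw [hm, WithLp.ofLp_smul, sub_eq_iff_eq_add, ← add_smul]
    field_simp
    rw [one_smul]
  have hnorm : WithLp.ofLp xt ⬝ᵥ WithLp.ofLp xt = ‖xt‖ ^ 2 := by
    rw [EuclideanSpace.real_norm_sq_eq]
    simp only [dotProduct, sq]
  have hdist : (xt - m) ⬝ᵥ (S⁻¹ *ᵥ (xt - m))
      = 4 * (n : ℝ) * ‖xt‖ ^ 2 / (((n : ℝ) + 1) * r ^ 2 + 4 * ‖xt‖ ^ 2) := by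
    rw [WithLp.ofLp_sub, hcentered, hS, ← vecMulVec,
      smul_dotProduct_inv_smul_one_add_smul_vecMulVec_self_mulVec_smul (by positivity)
        (by positivity), hnorm]
    field_simp
  refine ⟨hdist, fun hxt => ?_⟩
  have hq : ‖xt‖ ^ 2 ≠ 0 := by positivity
  rw [hdist]
  field_simp
end

section
/- (Theorem 1, second part, made precise.) Let μ₁ ∈ ℝ², r > 0, and a ∈ ℝ² with a ≠ 0 (the trigger shift a = ε·t/‖t‖). For a poisoned sample x̃ ∈ ℝ² with x̃ ≠ μ₁, define c̃₁(x̃) = ( μ₁ + r·(x̃ − μ₁)/‖x̃ − μ₁‖ + x̃ ) / 2, the misclassified region M(x̃) = { x ∈ ℝ² : ‖x − (μ₁ + a)‖ ≤ r and ⟨x − c̃₁(x̃), x̃ − μ₁⟩ ≥ 0 }, and sr(x̃) = ⟨a, x̃ − μ₁⟩/‖x̃ − μ₁‖ − ‖x̃ − μ₁‖/2 − r/2. Then for any two poisoned samples x̃₁, x̃₂ ∈ ℝ² \ {μ₁} with sr(x̃₁) ≤ sr(x̃₂), the Lebesgue measures satisfy vol(M(x̃₁)) ≤ vol(M(x̃₂));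 i.e., the success rate of the backdoor attack is a monotone nondecreasing function of sr(x̃) = ‖a‖·cos∠(a, x̃ − μ₁) − ‖x̃ − μ₁‖/2 − r/2. -/
open MeasureTheory

noncomputable abbrev E2 := EuclideanSpace ℝ (Fin 2)

/-- The standardized cap region. -/
def capSet (r s : ℝ) (u : E2) : Set E2 := {y | ‖y‖ ≤ r ∧ -s ≤ (inner ℝ y u : ℝ)}

lemma capSet_measurable (r s : ℝ) (u : E2) : MeasurableSet (capSet r s u) := by
  have hcont : Continuous fun y : E2 => (inner ℝ y u : ℝ) :=
    continuous_inner.comp (Continuous.prodMk continuous_id continuous_const)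
  exact ((isClosed_le continuous_norm continuous_const).inter
    (isClosed_le continuous_const hcont)).measurableSet

lemma capSet_vol_eq (r s : ℝ) (u₁ u₂ : E2) (h1 : ‖u₁‖ = 1) (h2 : ‖u₂‖ = 1) :
    volume (capSet r s u₁) = volume (capSet r s u₂) := by
  set f : E2 ≃ₗᵢ[ℝ] E2 := Submodule.reflection (ℝ ∙ (u₁ - u₂))ᗮ
  have hf : f u₁ = u₂ := Submodule.reflection_sub (h1.trans h2.symm)
  have hpre : f ⁻¹' capSet r s u₂ = capSet r s u₁ := by
    ext y
    simp only [capSet, Set.mem_preimage, Set.mem_setOf_eq, f.norm_map]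
    constructor <;> intro ⟨hy, hi⟩ <;> refine ⟨hy, ?_⟩
    · rwa [← hf, f.inner_map_map] at hi
    · rwa [← hf, f.inner_map_map]
  calc volume (capSet r s u₁) = volume (f ⁻¹' capSet r s u₂) := by rw [hpre]
    _ = volume (capSet r s u₂) :=
      f.measurePreserving.measure_preimage (capSet_measurable r s u₂).nullMeasurableSet

/-- Theorem 1, second part: with backdoored boundary through
`c̃₁(x̃) = (μ₁ + r·(x̃ − μ₁)/‖x̃ − μ₁‖ + x̃)/2` orthogonal to `x̃ − μ₁`, the misclassified
region `M(x̃) = {‖x − (μ₁ + a)‖ ≤ r, ⟨x − c̃₁(x̃), x̃ − μ₁⟩ ≥ 0}` has Lebesgue measure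
monotone nondecreasing in
`sr(x̃) = ⟨a, x̃ − μ₁⟩/‖x̃ − μ₁‖ − ‖x̃ − μ₁‖/2 − r/2 = ‖a‖·cos∠(a, x̃ − μ₁) − ‖x̃ − μ₁‖/2 − r/2`. -/
theorem success_rate_monotone_in_sr
    (μ₁ a : EuclideanSpace ℝ (Fin 2)) (r : ℝ) (hr : 0 < r) (ha : a ≠ 0)
    (c : EuclideanSpace ℝ (Fin 2) → EuclideanSpace ℝ (Fin 2))
    (hc : ∀ xt : EuclideanSpace ℝ (Fin 2),
      c xt = (2 : ℝ)⁻¹ • (μ₁ + r • (‖xt - μ₁‖⁻¹ • (xt - μ₁)) + xt))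
    (M : EuclideanSpace ℝ (Fin 2) → Set (EuclideanSpace ℝ (Fin 2)))
    (hM : ∀ xt : EuclideanSpace ℝ (Fin 2),
      M xt = {x | ‖x - (μ₁ + a)‖ ≤ r ∧ (inner ℝ (x - c xt) (xt - μ₁) : ℝ) ≥ 0})
    (sr : EuclideanSpace ℝ (Fin 2) → ℝ)
    (hsr : ∀ xt : EuclideanSpace ℝ (Fin 2),
      sr xt = (inner ℝ a (xt - μ₁) : ℝ) / ‖xt - μ₁‖ - ‖xt - μ₁‖ / 2 - r / 2) :
    ∀ xt₁ xt₂ : EuclideanSpace ℝ (Fin 2), xt₁ ≠ μ₁ → xt₂ ≠ μ₁ →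
      sr xt₁ ≤ sr xt₂ → volume (M xt₁) ≤ volume (M xt₂) := by
  have key : ∀ xt : E2, xt ≠ μ₁ →
      M xt = (fun x => x + -(μ₁ + a)) ⁻¹' capSet r (sr xt) (‖xt - μ₁‖⁻¹ • (xt - μ₁)) := by
    intro xt hxt
    have hd : (0:ℝ) < ‖xt - μ₁‖ := by
      rw [norm_pos_iff]; exact sub_ne_zero_of_ne hxt
    ext x
    rw [hM]
    simp only [capSet, Set.mem_preimage, Set.mem_setOf_eq, ← sub_eq_add_neg]
    have hvv : (inner ℝ (xt - μ₁) (xt - μ₁) : ℝ) = ‖xt - μ₁‖ ^ 2 := real_inner_self_eq_norm_sq _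
    have hxtv : (inner ℝ xt (xt - μ₁) : ℝ)
        = ‖xt - μ₁‖ ^ 2 + (inner ℝ μ₁ (xt - μ₁) : ℝ) := by
      have h := inner_sub_left (𝕜 := ℝ) xt μ₁ (xt - μ₁)
      linarith [hvv, h]
    have heq : ‖xt - μ₁‖ * ((inner ℝ (x - (μ₁ + a)) (‖xt - μ₁‖⁻¹ • (xt - μ₁)) : ℝ) + sr xt)
        = (inner ℝ (x - c xt) (xt - μ₁) : ℝ) := by
      rw [hc, hsr]
      simp only [inner_sub_left, inner_add_left, real_inner_smul_left, real_inner_smul_right]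
      rw [hxtv]
      field_simp
      ring
    constructor <;> intro ⟨h1, h2⟩ <;> refine ⟨h1, ?_⟩
    · nlinarith [heq, hd, h2]
    · have : (0:ℝ) ≤ ‖xt - μ₁‖ * ((inner ℝ (x - (μ₁ + a)) (‖xt - μ₁‖⁻¹ • (xt - μ₁)) : ℝ) + sr xt) :=
        mul_nonneg hd.le (by linarith)
      rw [heq] at this
      exact this
  intro xt₁ xt₂ h1 h2 hle
  have hu : ∀ xt : E2, xt ≠ μ₁ → ‖(‖xt - μ₁‖⁻¹ • (xt - μ₁) : E2)‖ = 1 := by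
    intro xt hxt
    have hd : (0:ℝ) < ‖xt - μ₁‖ := by rw [norm_pos_iff]; exact sub_ne_zero_of_ne hxt
    rw [norm_smul, norm_inv, norm_norm, inv_mul_cancel₀ hd.ne']
  rw [key _ h1, key _ h2,
    measure_preimage_add_right volume _ _, measure_preimage_add_right volume _ _]
  calc volume (capSet r (sr xt₁) (‖xt₁ - μ₁‖⁻¹ • (xt₁ - μ₁)))
      ≤ volume (capSet r (sr xt₂) (‖xt₁ - μ₁‖⁻¹ • (xt₁ - μ₁))) := by
        apply measure_mono
        intro y ⟨hy, hi⟩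
        exact ⟨hy, le_trans (by linarith) hi⟩
    _ = volume (capSet r (sr xt₂) (‖xt₂ - μ₁‖⁻¹ • (xt₂ - μ₁))) :=
        capSet_vol_eq r (sr xt₂) _ _ (hu _ h1) (hu _ h2)
end
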